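/- arXiv:2504.20936 — 2 statements merged into one kernel-verified Lean document; each statement's English description precedes it below -/
import Mathlib

section
/- Let (P,·,{·,·}) be a Poisson algebra over a field K equipped with a symplectic structure ω, and suppose ∗ and ∘ are bilinear operations on P satisfying ω(x∗y, z) = ω(y, x·z) and ω(x∘y, z) = −ω(y, {x,z}) for all x,y,z ∈ P. Then (P,∗,∘) is a pre-Poisson algebra, and its sub-adjacent operations recover the original ones: x∗y + y∗x = x·y and x∘y − y∘x = {x,y} for all x,y ∈ P. -/
/-!
Pairing with `ω` turns `x ∗ -` and `x ∘ -` into the `ω`-adjoints of `x · -` and `-{x, -}`.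
Since `ω` is nondegenerate, an operator is determined by its adjoint, so each pre-Poisson
identity is the adjoint of an identity of the Poisson algebra read with the order of
composition reversed: Zinbiel comes from associativity, pre-Lie from the Jacobi identity
(`ad` is a Lie morphism), and the two compatibilities from the Leibniz rule in each argument.
The sub-adjacent identities are the two cyclicity conditions on `ω`.
-/

namespace LinearMap

theorem SeparatingLeft.injective {R M M₁ : Type*} [CommRing R] [AddCommGroup M] [Module R M]
    [AddCommGroup M₁] [Module R M₁] {B : M →ₗ[R] M →ₗ[R] M₁} (hB : B.SeparatingLeft) :
    Function.Injective B :=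
  ker_eq_bot.mp (separatingLeft_iff_ker_eq_bot.mp hB)

theorem IsAdjointPair.eq_of_separatingLeft {R M M₁ M₂ : Type*} [CommRing R]
    [AddCommGroup M] [Module R M] [AddCommGroup M₁] [Module R M₁] [AddCommGroup M₂] [Module R M₂]
    {B : M →ₗ[R] M →ₗ[R] M₂} {B' : M₁ →ₗ[R] M₁ →ₗ[R] M₂} (hB' : B'.SeparatingLeft)
    {f f' : M → M₁} {g g' : M₁ → M} (h : IsAdjointPair B B' f g) (h' : IsAdjointPair B B' f' g')
    (hg : g = g') : f = f' := by
  subst hg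
  exact funext fun x ↦ hB'.injective <| ext fun y ↦ (h x y).trans (h' x y).symm

theorem IsAlt.apply_eq_add_of_cyclic {R M : Type*} [CommRing R] [AddCommGroup M] [Module R M]
    {ω : M →ₗ[R] M →ₗ[R] R} (hω : ω.IsAlt) {μ : M →ₗ[R] M →ₗ[R] M}
    (hcyc : ∀ x y z, ω (μ x y) z + ω (μ y z) x + ω (μ z x) y = 0) (x y z : M) :
    ω (μ x y) z = ω x (μ y z) + ω y (μ z x) := by
  rw [← hω.neg (μ y z), ← hω.neg (μ z x)]
  linear_combination hcyc x y z

end LinearMap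

section PoissonIdentities

variable {K P : Type*} [CommRing K] [AddCommGroup P] [Module K P] {pmul pbr : P →ₗ[K] P →ₗ[K] P}

theorem mul_mul_eq_of_comm_of_assoc (hcomm : ∀ x y : P, pmul x y = pmul y x)
    (hassoc : ∀ x y z : P, pmul (pmul x y) z = pmul x (pmul y z)) (x y : P) :
    pmul (pmul x y) = pmul y * pmul x := by
  ext z
  rw [Module.End.mul_apply, hassoc, ← hassoc, hcomm x, hassoc]

theorem mul_bracket_eq_of_leibniz
    (hleib : ∀ x y z : P, pbr x (pmul y z) = pmul (pbr x y) z + pmul y (pbr x z)) (x y : P) :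
    pmul (pbr x y) = pbr x * pmul y - pmul y * pbr x := by
  ext z
  simp only [LinearMap.sub_apply, Module.End.mul_apply, hleib, add_sub_cancel_right]

theorem bracket_mul_eq_of_leibniz (hcomm : ∀ x y : P, pmul x y = pmul y x) (halt : pbr.IsAlt)
    (hleib : ∀ x y z : P, pbr x (pmul y z) = pmul (pbr x y) z + pmul y (pbr x z)) (x y : P) :
    pbr (pmul x y) = pbr y * pmul x + pbr x * pmul y := by
  ext z
  rw [LinearMap.add_apply, Module.End.mul_apply, Module.End.mul_apply, ← halt.neg,
    hleib, hleib, hleib, ← halt.neg x z, ← halt.neg y z, ← halt.neg x y]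
  simp only [map_neg, LinearMap.neg_apply]
  rw [hcomm (pbr x z)]
  abel

theorem bracket_bracket_eq_of_jacobi (halt : pbr.IsAlt)
    (hjac : ∀ x y z : P, pbr x (pbr y z) + pbr y (pbr z x) + pbr z (pbr x y) = 0) (x y : P) :
    pbr (pbr x y) = pbr x * pbr y - pbr y * pbr x := by
  ext z
  have h := hjac x y z
  rw [← halt.neg x z, map_neg, ← halt.neg (pbr x y) z] at h
  rw [LinearMap.sub_apply, Module.End.mul_apply, Module.End.mul_apply]
  linear_combination (norm := module) -h

end PoissonIdentities

section Symplectic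

variable {K P : Type*} [CommRing K] [AddCommGroup P] [Module K P] {ω : P →ₗ[K] P →ₗ[K] K}
  {pmul pbr smul scir : P →ₗ[K] P →ₗ[K] P}

theorem symmetrization_eq_of_isAdjointPair (hω : ω.IsAlt) (hωnd : ω.SeparatingLeft)
    (hcyc : ∀ x y z, ω (pmul x y) z + ω (pmul y z) x + ω (pmul z x) y = 0)
    (hcomm : ∀ x y : P, pmul x y = pmul y x) (hs : ∀ x, ω.IsAdjointPair ω (smul x) (pmul x))
    (x y : P) : smul x y + smul y x = pmul x y := by
  refine hωnd.injective <| LinearMap.ext fun w ↦ ?_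
  rw [map_add, LinearMap.add_apply, hs, hs, hω.apply_eq_add_of_cyclic hcyc, hcomm w, add_comm]

theorem antisymmetrization_eq_of_isAdjointPair (hω : ω.IsAlt) (hωnd : ω.SeparatingLeft)
    (hcyc : ∀ x y z, ω (pbr x y) z + ω (pbr y z) x + ω (pbr z x) y = 0) (halt : pbr.IsAlt)
    (hc : ∀ x, ω.IsAdjointPair ω (scir x) ⇑(-pbr x)) (x y : P) :
    scir x y - scir y x = pbr x y := by
  refine hωnd.injective <| LinearMap.ext fun w ↦ ?_
  rw [map_sub, LinearMap.sub_apply, hc, hc, hω.apply_eq_add_of_cyclic hcyc, ← halt.neg x w]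
  simp only [LinearMap.neg_apply, map_neg]
  abel

end Symplectic

/-- A symplectic Poisson algebra induces a compatible pre-Poisson
algebra structure. -/
theorem prePoisson_of_symplectic_poisson
    {K : Type*} [Field K] {P : Type*} [AddCommGroup P] [Module K P]
    (pmul pbr : P →ₗ[K] P →ₗ[K] P)
    (hcomm : ∀ x y : P, pmul x y = pmul y x)
    (hassoc : ∀ x y z : P, pmul (pmul x y) z = pmul x (pmul y z))
    (halt : ∀ x : P, pbr x x = 0)
    (hjac : ∀ x y z : P, pbr x (pbr y z) + pbr y (pbr z x) + pbr z (pbr x y) = 0)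
    (hleib : ∀ x y z : P, pbr x (pmul y z) = pmul (pbr x y) z + pmul y (pbr x z))
    (ω : P →ₗ[K] P →ₗ[K] K)
    (hωalt : ∀ x : P, ω x x = 0)
    (hωnd : ∀ x : P, (∀ y : P, ω x y = 0) → x = 0)
    (hωcyc1 : ∀ x y z : P, ω (pbr x y) z + ω (pbr y z) x + ω (pbr z x) y = 0)
    (hωcyc2 : ∀ x y z : P, ω (pmul x y) z + ω (pmul y z) x + ω (pmul z x) y = 0)
    (smul scir : P →ₗ[K] P →ₗ[K] P)
    (hs : ∀ x y z : P, ω (smul x y) z = ω y (pmul x z))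
    (hc : ∀ x y z : P, ω (scir x y) z = - ω y (pbr x z)) :
    (∀ x y z : P, smul x (smul y z) = smul (smul x y + smul y x) z) ∧
    (∀ x y z : P,
      scir (scir x y) z - scir x (scir y z)
        = scir (scir y x) z - scir y (scir x z)) ∧
    (∀ x y z : P,
      smul (scir x y - scir y x) z = scir x (smul y z) - smul y (scir x z)) ∧
    (∀ x y z : P,
      scir (smul x y + smul y x) z = smul x (scir y z) + smul y (scir x z)) ∧
    (∀ x y : P, smul x y + smul y x = pmul x y) ∧
    (∀ x y : P, scir x y - scir y x = pbr x y) := by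
  have hsmul : ∀ x, ω.IsAdjointPair ω (smul x) (pmul x) := hs
  have hscir : ∀ x, ω.IsAdjointPair ω (scir x) ⇑(-pbr x) := fun x y z ↦ by
    rw [hc, LinearMap.neg_apply, map_neg]
  have hm := symmetrization_eq_of_isAdjointPair hωalt hωnd hωcyc2 hcomm hsmul
  have hb := antisymmetrization_eq_of_isAdjointPair hωalt hωnd hωcyc1 halt hscir
  refine ⟨fun x y z ↦ ?_, fun x y z ↦ ?_, fun x y z ↦ ?_, fun x y z ↦ ?_, hm, hb⟩
  · rw [hm]
    exact congr_fun (((hsmul x).mul (hsmul y)).eq_of_separatingLeft hωnd (hsmul _)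
      (congrArg DFunLike.coe (mul_mul_eq_of_comm_of_assoc hcomm hassoc x y).symm)) z
  · have hadj : -pbr (pbr x y) = -pbr y * -pbr x - -pbr x * -pbr y := by
      rw [bracket_bracket_eq_of_jacobi halt hjac]
      noncomm_ring
    rw [sub_eq_sub_iff_sub_eq_sub, ← LinearMap.sub_apply, ← map_sub, hb]
    exact congr_fun ((hscir _).eq_of_separatingLeft hωnd
      (((hscir x).mul (hscir y)).sub ((hscir y).mul (hscir x))) (congrArg DFunLike.coe hadj)) z
  · have hadj : pmul (pbr x y) = pmul y * -pbr x - -pbr x * pmul y := by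
      rw [mul_bracket_eq_of_leibniz hleib]
      noncomm_ring
    rw [hb]
    exact congr_fun ((hsmul _).eq_of_separatingLeft hωnd
      (((hscir x).mul (hsmul y)).sub ((hsmul y).mul (hscir x))) (congrArg DFunLike.coe hadj)) z
  · have hadj : -pbr (pmul x y) = -pbr y * pmul x + -pbr x * pmul y := by
      rw [bracket_mul_eq_of_leibniz hcomm halt hleib]
      noncomm_ring
    rw [hm]
    exact congr_fun ((hscir _).eq_of_separatingLeft hωnd
      (((hsmul x).mul (hscir y)).add ((hsmul y).mul (hscir x))) (congrArg DFunLike.coe hadj)) z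
end

section
/- Let (P,∗,∘) be a finite-dimensional pre-Poisson algebra over a field K, λ ∈ K nonzero, and r ∈ P⊗P with Z(r) = 0, S(r) = 0, r − τ(r) (L,R)-invariant, and I := r₊ − r₋ bijective (a factorizable structure). Let B := λ·r₋∘I⁻¹ and let ∗_B, ∘_B be the descendent operations x∗_By := B(x)∗y + x∗B(y) + λx∗y and x∘_By := B(x)∘y + x∘B(y) + λx∘y. Then the map φ := (1/λ)·I : P* → P is an isomorphism of pre-Poisson algebras from (P*, ∗_r, ∘_r) to (P, ∗_B, ∘_B): φ is bijective and φ(ξ∗_rη) = φ(ξ)∗_Bφ(η) and φ(ξ∘_rη) = φ(ξ)∘_Bφ(η) for all ξ,η ∈ P*. -/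
open TensorProduct

section

variable {K : Type*} [Field K] {P : Type*} [AddCommGroup P] [Module K P]

/-- The map `r₊ : P* → P` induced by `r ∈ P ⊗ P`: if `r = Σᵢ aᵢ ⊗ bᵢ` then
`r₊(ξ) = Σᵢ ξ(aᵢ) • bᵢ`, so that `η(r₊ ξ) = r(ξ, η)`. -/
noncomputable def rPlus (r : P ⊗[K] P) (ξ : Module.Dual K P) : P :=
  TensorProduct.lift ((LinearMap.lsmul K P).comp ξ) r

/-- The map `r₋ : P* → P` induced by `r ∈ P ⊗ P`: if `r = Σᵢ aᵢ ⊗ bᵢ` then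
`r₋(η) = Σᵢ η(bᵢ) • aᵢ`, so that `ξ(r₋ η) = r(ξ, η)`. -/
noncomputable def rMinus (r : P ⊗[K] P) (η : Module.Dual K P) : P :=
  TensorProduct.lift (((LinearMap.lsmul K P).comp η).flip) r

/-- `(L,R)`-invariance of an element `a ∈ P ⊗ P`. -/
def LRinv (mul cir : P →ₗ[K] P →ₗ[K] P) (a : P ⊗[K] P) : Prop :=
  (∀ x : P,
    (TensorProduct.map (mul x) (LinearMap.id : P →ₗ[K] P)
      - TensorProduct.map (LinearMap.id : P →ₗ[K] P) (mul x + mul.flip x)) a = 0) ∧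
  (∀ x : P,
    (TensorProduct.map (cir x) (LinearMap.id : P →ₗ[K] P)
      + TensorProduct.map (LinearMap.id : P →ₗ[K] P) (cir x - cir.flip x)) a = 0)

/-- The Zinbiel Yang–Baxter expression `Z(r)` for `r = Σᵢ aᵢ ⊗ bᵢ`. -/
noncomputable def Zsum (mul : P →ₗ[K] P →ₗ[K] P) {n : ℕ} (a b : Fin n → P) :
    P ⊗[K] (P ⊗[K] P) :=
  - ∑ i, ∑ j, mul (a i) (a j) ⊗ₜ[K] (b j ⊗ₜ[K] b i)
  - ∑ i, ∑ j, b j ⊗ₜ[K] (mul (a i) (a j) ⊗ₜ[K] b i)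
  + ∑ i, ∑ j, (mul (a i) (b j) + mul (b j) (a i)) ⊗ₜ[K] (a j ⊗ₜ[K] b i)
  + ∑ i, ∑ j, a i ⊗ₜ[K] ((mul (b i) (a j) + mul (a j) (b i)) ⊗ₜ[K] b j)
  - ∑ i, ∑ j, a i ⊗ₜ[K] (a j ⊗ₜ[K] (mul (b i) (b j) + mul (b j) (b i)))

/-- The S-equation expression `S(r)` for `r = Σᵢ aᵢ ⊗ bᵢ`. -/
noncomputable def Ssum (cir : P →ₗ[K] P →ₗ[K] P) {n : ℕ} (a b : Fin n → P) :
    P ⊗[K] (P ⊗[K] P) :=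
  ∑ i, ∑ j, cir (a i) (a j) ⊗ₜ[K] (b j ⊗ₜ[K] b i)
  - ∑ i, ∑ j, b j ⊗ₜ[K] (cir (a i) (a j) ⊗ₜ[K] b i)
  + ∑ i, ∑ j, b j ⊗ₜ[K] ((cir (a i) (a j) - cir (a j) (a i)) ⊗ₜ[K] b i)
  - ∑ i, ∑ j, (cir (a i) (b j) - cir (b j) (a i)) ⊗ₜ[K] (a j ⊗ₜ[K] b i)
  - ∑ i, ∑ j, a i ⊗ₜ[K] (a j ⊗ₜ[K] (cir (b i) (b j) - cir (b j) (b i)))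

/-- The multiplication `∗_r` induced by `r` on the dual space:
`(ξ ∗_r η)(y) = η(r₊ξ ∗ y + y ∗ r₊ξ) − ξ(y ∗ r₋η)`. -/
noncomputable def srOp (mul : P →ₗ[K] P →ₗ[K] P) (r : P ⊗[K] P)
    (ξ η : Module.Dual K P) : Module.Dual K P :=
  η ∘ₗ (mul (rPlus r ξ) + mul.flip (rPlus r ξ)) - ξ ∘ₗ mul.flip (rMinus r η)

/-- The multiplication `∘_r` induced by `r` on the dual space:
`(ξ ∘_r η)(y) = −η(r₊ξ ∘ y − y ∘ r₊ξ) + ξ(y ∘ r₋η)`. -/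
noncomputable def crOp (cir : P →ₗ[K] P →ₗ[K] P) (r : P ⊗[K] P)
    (ξ η : Module.Dual K P) : Module.Dual K P :=
  - (η ∘ₗ (cir (rPlus r ξ) - cir.flip (rPlus r ξ))) + ξ ∘ₗ cir.flip (rMinus r η)


/-!
Write `I = r₊ − r₋`. Contracting the invariance identities of `r − τ(r)` with a covector, and using
`r₊(r − τ(r)) = I` and `r₋(r − τ(r)) = −I`, lets the multiplication operators pass through `I`;
this gives `I(ξ ∗_r η) = r₊ξ ∗ Iη + Iξ ∗ r₋η` and the same formula for `∘_r`. Since `r₊ = r₋ + I`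
and `B(φ ξ) = r₋ ξ`, the right-hand side is `λ` times the descendent product of `φ ξ` and `φ η`.
-/

@[simp] lemma rPlus_tmul (x y : P) (ξ : Module.Dual K P) : rPlus (x ⊗ₜ[K] y) ξ = ξ x • y := by
  simp [rPlus]

@[simp] lemma rMinus_tmul (x y : P) (η : Module.Dual K P) : rMinus (x ⊗ₜ[K] y) η = η y • x := by
  simp [rMinus]

@[simp] lemma rPlus_zero_left (ξ : Module.Dual K P) : rPlus (0 : P ⊗[K] P) ξ = 0 :=
  map_zero _

@[simp] lemma rMinus_zero_left (η : Module.Dual K P) : rMinus (0 : P ⊗[K] P) η = 0 :=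
  map_zero _

lemma rPlus_add_left (r s : P ⊗[K] P) (ξ : Module.Dual K P) :
    rPlus (r + s) ξ = rPlus r ξ + rPlus s ξ :=
  map_add _ r s

lemma rMinus_add_left (r s : P ⊗[K] P) (η : Module.Dual K P) :
    rMinus (r + s) η = rMinus r η + rMinus s η :=
  map_add _ r s

lemma rPlus_comm (r : P ⊗[K] P) (ξ : Module.Dual K P) :
    rPlus (TensorProduct.comm K P P r) ξ = rMinus r ξ := by
  induction r using TensorProduct.induction_on <;> simp_all [rPlus_add_left, rMinus_add_left]

lemma rPlus_add (r : P ⊗[K] P) (ξ η : Module.Dual K P) :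
    rPlus r (ξ + η) = rPlus r ξ + rPlus r η := by
  induction r using TensorProduct.induction_on with
  | zero => simp
  | tmul x y => simp [add_smul]
  | add a b ha hb => simp only [rPlus_add_left, ha, hb]; abel

lemma rPlus_smul (r : P ⊗[K] P) (c : K) (ξ : Module.Dual K P) :
    rPlus r (c • ξ) = c • rPlus r ξ := by
  induction r using TensorProduct.induction_on <;> simp_all [rPlus_add_left, smul_smul]

lemma rPlus_map_left (A : P →ₗ[K] P) (t : P ⊗[K] P) (ζ : Module.Dual K P) :
    rPlus (TensorProduct.map A LinearMap.id t) ζ = rPlus t (ζ ∘ₗ A) := by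
  induction t using TensorProduct.induction_on <;> simp_all [rPlus_add_left]

lemma rPlus_map_right (C : P →ₗ[K] P) (t : P ⊗[K] P) (ζ : Module.Dual K P) :
    rPlus (TensorProduct.map LinearMap.id C t) ζ = C (rPlus t ζ) := by
  induction t using TensorProduct.induction_on <;> simp_all [rPlus_add_left]

lemma rMinus_comm (r : P ⊗[K] P) (η : Module.Dual K P) :
    rMinus (TensorProduct.comm K P P r) η = rPlus r η := by
  induction r using TensorProduct.induction_on <;> simp_all [rPlus_add_left, rMinus_add_left]

lemma rMinus_add (r : P ⊗[K] P) (ξ η : Module.Dual K P) :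
    rMinus r (ξ + η) = rMinus r ξ + rMinus r η := by
  induction r using TensorProduct.induction_on with
  | zero => simp
  | tmul x y => simp [add_smul]
  | add a b ha hb => simp only [rMinus_add_left, ha, hb]; abel

lemma rMinus_smul (r : P ⊗[K] P) (c : K) (ξ : Module.Dual K P) :
    rMinus r (c • ξ) = c • rMinus r ξ := by
  induction r using TensorProduct.induction_on <;> simp_all [rMinus_add_left, smul_smul]

lemma rMinus_map_left (A : P →ₗ[K] P) (t : P ⊗[K] P) (ζ : Module.Dual K P) :
    rMinus (TensorProduct.map A LinearMap.id t) ζ = A (rMinus t ζ) := by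
  induction t using TensorProduct.induction_on <;> simp_all [rMinus_add_left]

lemma rMinus_map_right (C : P →ₗ[K] P) (t : P ⊗[K] P) (ζ : Module.Dual K P) :
    rMinus (TensorProduct.map LinearMap.id C t) ζ = rMinus t (ζ ∘ₗ C) := by
  induction t using TensorProduct.induction_on <;> simp_all [rMinus_add_left]

noncomputable def rDiff (r : P ⊗[K] P) : Module.Dual K P →ₗ[K] P where
  toFun ξ := rPlus r ξ - rMinus r ξ
  map_add' ξ η := by rw [rPlus_add, rMinus_add]; abel
  map_smul' c ξ := by rw [rPlus_smul, rMinus_smul, smul_sub, RingHom.id_apply]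

lemma rDiff_apply (r : P ⊗[K] P) (ξ : Module.Dual K P) : rDiff r ξ = rPlus r ξ - rMinus r ξ :=
  rfl

lemma rPlus_sub_comm (r : P ⊗[K] P) (ξ : Module.Dual K P) :
    rPlus (r - TensorProduct.comm K P P r) ξ = rDiff r ξ := by
  rw [rPlus, map_sub, ← rPlus, ← rPlus, rPlus_comm, rDiff_apply]

lemma rMinus_sub_comm (r : P ⊗[K] P) (ξ : Module.Dual K P) :
    rMinus (r - TensorProduct.comm K P P r) ξ = -rDiff r ξ := by
  rw [rMinus, map_sub, ← rMinus, ← rMinus, rMinus_comm, rDiff_apply, neg_sub]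

lemma rDiff_comp_of_map_eq {r : P ⊗[K] P} {A C : P →ₗ[K] P}
    (h : TensorProduct.map A LinearMap.id (r - TensorProduct.comm K P P r)
      = TensorProduct.map LinearMap.id C (r - TensorProduct.comm K P P r))
    (ζ : Module.Dual K P) :
    rDiff r (ζ ∘ₗ A) = C (rDiff r ζ) ∧ rDiff r (ζ ∘ₗ C) = A (rDiff r ζ) := by
  have hPlus := congr(rPlus $h ζ)
  have hMinus := congr(rMinus $h ζ)
  simp only [rPlus_map_left, rPlus_map_right, rMinus_map_left, rMinus_map_right, rPlus_sub_comm,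
    rMinus_sub_comm, map_neg, neg_inj] at hPlus hMinus
  exact ⟨hPlus, hMinus.symm⟩

lemma rDiff_srOp (mul : P →ₗ[K] P →ₗ[K] P) (r : P ⊗[K] P)
    (hinv : ∀ x : P,
      (TensorProduct.map (mul x) (LinearMap.id : P →ₗ[K] P)
        - TensorProduct.map (LinearMap.id : P →ₗ[K] P) (mul x + mul.flip x))
          (r - TensorProduct.comm K P P r) = 0)
    (ξ η : Module.Dual K P) :
    rDiff r (srOp mul r ξ η) = mul (rPlus r ξ) (rDiff r η) + mul (rDiff r ξ) (rMinus r η) := by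
  have h (x : P) := rDiff_comp_of_map_eq (r := r) (A := mul x) (C := mul x + mul.flip x) <| by
    rw [← sub_eq_zero, ← LinearMap.sub_apply]; exact hinv x
  have h_flip (b : P) (ζ : Module.Dual K P) : rDiff r (ζ ∘ₗ mul.flip b) = -mul (rDiff r ζ) b :=
    calc rDiff r (ζ ∘ₗ mul.flip b)
        = rDiff r (ζ ∘ₗ (mul b + mul.flip b)) - rDiff r (ζ ∘ₗ mul b) := by
          rw [LinearMap.comp_add, map_add, add_sub_cancel_left]
      _ = -mul (rDiff r ζ) b := by
          rw [(h b ζ).1, (h b ζ).2, LinearMap.add_apply, sub_add_cancel_left, LinearMap.flip_apply]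
  rw [srOp, map_sub, (h _ η).2, h_flip, sub_neg_eq_add]

lemma rDiff_crOp (cir : P →ₗ[K] P →ₗ[K] P) (r : P ⊗[K] P)
    (hinv : ∀ x : P,
      (TensorProduct.map (cir x) (LinearMap.id : P →ₗ[K] P)
        + TensorProduct.map (LinearMap.id : P →ₗ[K] P) (cir x - cir.flip x))
          (r - TensorProduct.comm K P P r) = 0)
    (ξ η : Module.Dual K P) :
    rDiff r (crOp cir r ξ η) = cir (rPlus r ξ) (rDiff r η) + cir (rDiff r ξ) (rMinus r η) := by
  have h (x : P) := rDiff_comp_of_map_eq (r := r) (A := cir x) (C := -(cir x - cir.flip x)) <| by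
    rw [← LinearMap.lTensor_def, LinearMap.lTensor_neg, LinearMap.neg_apply, eq_neg_iff_add_eq_zero]
    exact hinv x
  have h_sub (a : P) (ζ : Module.Dual K P) :
      rDiff r (ζ ∘ₗ (cir a - cir.flip a)) = -cir a (rDiff r ζ) := by
    rw [← neg_eq_iff_eq_neg, ← map_neg, ← LinearMap.comp_neg, (h a ζ).2]
  have h_flip (b : P) (ζ : Module.Dual K P) : rDiff r (ζ ∘ₗ cir.flip b) = cir (rDiff r ζ) b :=
    calc rDiff r (ζ ∘ₗ cir.flip b)
        = rDiff r (ζ ∘ₗ cir b) - rDiff r (ζ ∘ₗ (cir b - cir.flip b)) := by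
          rw [LinearMap.comp_sub, map_sub, sub_sub_cancel]
      _ = cir (rDiff r ζ) b := by
          rw [(h b ζ).1, h_sub]
          simp only [LinearMap.neg_apply, LinearMap.sub_apply, LinearMap.flip_apply]
          abel
  rw [crOp, map_add, map_neg, h_sub, h_flip, neg_neg]

lemma rPlus_eq_rMinus_add_rDiff (r : P ⊗[K] P) (ξ : Module.Dual K P) :
    rPlus r ξ = rMinus r ξ + rDiff r ξ := by
  rw [rDiff_apply, add_sub_cancel]

lemma map_op_eq_descendent (m : P →ₗ[K] P →ₗ[K] P) {lam : K} (hlam : lam ≠ 0) {r : P ⊗[K] P}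
    {op : Module.Dual K P → Module.Dual K P → Module.Dual K P}
    (hop : ∀ ξ η, rDiff r (op ξ η) = m (rPlus r ξ) (rDiff r η) + m (rDiff r ξ) (rMinus r η))
    {B : P → P} {φ : Module.Dual K P → P} (hφ : ∀ ξ, φ ξ = lam⁻¹ • rDiff r ξ)
    (hBφ : ∀ ξ, B (φ ξ) = rMinus r ξ) (ξ η : Module.Dual K P) :
    φ (op ξ η) = m (B (φ ξ)) (φ η) + m (φ ξ) (B (φ η)) + lam • m (φ ξ) (φ η) := by
  rw [hBφ, hBφ, hφ, hφ, hφ, hop, rPlus_eq_rMinus_add_rDiff]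
  simp only [map_add, map_smul, LinearMap.add_apply, LinearMap.smul_apply, smul_add, smul_smul,
    mul_inv_cancel_left₀ hlam]
  abel

theorem factorizable_iso_descendent_general
    (mul cir : P →ₗ[K] P →ₗ[K] P)
    (lam : K) (hlam : lam ≠ 0)
    (r : P ⊗[K] P)
    (hinv : LRinv mul cir (r - TensorProduct.comm K P P r))
    -- `J` is the inverse of the bijection `I = r₊ − r₋`
    (J : P → Module.Dual K P)
    (hJ1 : ∀ x : P, rPlus r (J x) - rMinus r (J x) = x)
    (hJ2 : ∀ ξ : Module.Dual K P, J (rPlus r ξ - rMinus r ξ) = ξ) :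
    ∀ B : P → P, (∀ x : P, B x = lam • rMinus r (J x)) →
    ∀ φ : Module.Dual K P → P,
      (∀ ξ : Module.Dual K P, φ ξ = lam⁻¹ • (rPlus r ξ - rMinus r ξ)) →
      Function.Bijective φ ∧
      (∀ ξ η : Module.Dual K P,
        φ (srOp mul r ξ η)
          = mul (B (φ ξ)) (φ η) + mul (φ ξ) (B (φ η)) + lam • mul (φ ξ) (φ η)) ∧
      (∀ ξ η : Module.Dual K P,
        φ (crOp cir r ξ η)
          = cir (B (φ ξ)) (φ η) + cir (φ ξ) (B (φ η)) + lam • cir (φ ξ) (φ η)) := by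
  intro B hB φ hφ
  have hJφ (ξ : Module.Dual K P) : J (φ ξ) = lam⁻¹ • ξ := by
    rw [hφ, smul_sub, ← rPlus_smul, ← rMinus_smul, hJ2]
  have hBφ (ξ : Module.Dual K P) : B (φ ξ) = rMinus r ξ := by
    rw [hB, hJφ, rMinus_smul, smul_inv_smul₀ hlam]
  have hφ_bij : Function.Bijective φ := Function.bijective_iff_has_inverse.2
    ⟨fun x ↦ J (lam • x), fun ξ ↦ by simp only [hφ, smul_inv_smul₀ hlam, hJ2],
      fun x ↦ by simp only [hφ, hJ1, inv_smul_smul₀ hlam]⟩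
  exact ⟨hφ_bij, map_op_eq_descendent mul hlam (rDiff_srOp mul r hinv.1) hφ hBφ,
    map_op_eq_descendent cir hlam (rDiff_crOp cir r hinv.2) hφ hBφ⟩

/-- For a factorizable structure `r` with induced Rota–Baxter
operator `B = λ·r₋∘I⁻¹`, the map `φ = (1/λ)·I` is an isomorphism of
pre-Poisson algebras from `(P*, ∗_r, ∘_r)` to the descendent pre-Poisson
algebra `(P, ∗_B, ∘_B)`. -/
theorem factorizable_iso_descendent
    [FiniteDimensional K P]
    (mul cir : P →ₗ[K] P →ₗ[K] P)
    (hZin : ∀ x y z : P, mul x (mul y z) = mul (mul x y + mul y x) z)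
    (hPre : ∀ x y z : P,
      cir (cir x y) z - cir x (cir y z) = cir (cir y x) z - cir y (cir x z))
    (hC1 : ∀ x y z : P,
      mul (cir x y - cir y x) z = cir x (mul y z) - mul y (cir x z))
    (hC2 : ∀ x y z : P,
      cir (mul x y + mul y x) z = mul x (cir y z) + mul y (cir x z))
    (lam : K) (hlam : lam ≠ 0)
    (r : P ⊗[K] P)
    (hYB : ∀ (n : ℕ) (a b : Fin n → P), r = ∑ i, a i ⊗ₜ[K] b i →
      Zsum mul a b = 0 ∧ Ssum cir a b = 0)
    (hinv : LRinv mul cir (r - TensorProduct.comm K P P r))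
    -- `J` is the inverse of the bijection `I = r₊ − r₋`
    (J : P → Module.Dual K P)
    (hJ1 : ∀ x : P, rPlus r (J x) - rMinus r (J x) = x)
    (hJ2 : ∀ ξ : Module.Dual K P, J (rPlus r ξ - rMinus r ξ) = ξ) :
    ∀ B : P → P, (∀ x : P, B x = lam • rMinus r (J x)) →
    ∀ φ : Module.Dual K P → P,
      (∀ ξ : Module.Dual K P, φ ξ = lam⁻¹ • (rPlus r ξ - rMinus r ξ)) →
      Function.Bijective φ ∧
      (∀ ξ η : Module.Dual K P,
        φ (srOp mul r ξ η)
          = mul (B (φ ξ)) (φ η) + mul (φ ξ) (B (φ η)) + lam • mul (φ ξ) (φ η)) ∧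
      (∀ ξ η : Module.Dual K P,
        φ (crOp cir r ξ η)
          = cir (B (φ ξ)) (φ η) + cir (φ ξ) (B (φ η)) + lam • cir (φ ξ) (φ η)) :=
  factorizable_iso_descendent_general mul cir lam hlam r hinv J hJ1 hJ2

end
end
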